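/- Let V be a finite set, F ⊆ V, let w be a non-empty finite word over V that is an {F}-burden, let v ∈ F, and let ρ be an infinite sequence over V in which v appears at most once. Then maxscore_{{F}}(wρ) ≤ 2, i.e., score_F(wx) ≤ 2 for every finite prefix x of ρ. -/

import Mathlib

/- Common definitions for finite-time Muller games, following
   McNaughton / Fearnley-Zimmermann. -/

universe u

variable {V : Type u}

/-- The occurrence set of a finite word: the set of letters occurring in it. -/
def occ (x : List V) : Set V := {v | v ∈ x}

/-- `score F w` is the maximal `k` such that some suffix of `w` decomposes as
`x₁ ⋯ x_k` with every `xᵢ` non-empty and `occ xᵢ = F` (with `max ∅ = 0`). -/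
noncomputable def score (F : Set V) (w : List V) : ℕ :=
  sSup {k | ∃ xs : List (List V), xs.length = k ∧
    (∀ x ∈ xs, x ≠ [] ∧ occ x = F) ∧ xs.flatten <:+ w}

/-- `maxscore 𝓕 w` is the maximum of `score F u` over `F ∈ 𝓕` and non-empty
prefixes `u` of `w`. -/
noncomputable def maxscore (𝓕 : Set (Set V)) (w : List V) : ℕ :=
  sSup {n | ∃ F ∈ 𝓕, ∃ u : List V, u ≠ [] ∧ u <+: w ∧ n = score F u}

/-- `AccGood F w x` : `x` is a suffix of `w` with `occ x ⊆ F` such that removing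
any suffix `y` of `x` from `w` does not change the score of `F`. -/
def AccGood (F : Set V) (w x : List V) : Prop :=
  x <:+ w ∧ occ x ⊆ F ∧
    ∀ y : List V, y <:+ x → score F (w.take (w.length - y.length)) = score F w

/-- The accumulator `acc F w` : the occurrence set of the longest suffix `x` of `w`
with `occ x ⊆ F` such that the score of `F` did not change during `x`. -/
noncomputable def acc (F : Set V) (w : List V) : Set V :=
  occ (w.drop (sInf {i | AccGood F w (w.drop i)}))

/-- A non-empty word `w` is an `𝓕`-burden if `maxscore 𝓕 w ≤ 2` and for every
`F ∈ 𝓕` either `score F w = 0`, or `score F w = 1` and `acc F w = ∅`. -/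
def Burden (𝓕 : Set (Set V)) (w : List V) : Prop :=
  w ≠ [] ∧ maxscore 𝓕 w ≤ 2 ∧
    ∀ F ∈ 𝓕, score F w = 0 ∨ (score F w = 1 ∧ acc F w = ∅)

/-- The maxscore of an infinite sequence: the supremum (in `ℕ∞`) of the scores of
sets `F ∈ 𝓕` over all non-empty finite prefixes. -/
noncomputable def maxscoreInf (𝓕 : Set (Set V)) (ρ : ℕ → V) : ℕ∞ :=
  ⨆ F ∈ 𝓕, ⨆ n : ℕ, (score F ((List.range (n + 1)).map ρ) : ℕ∞)

/-- The set of elements occurring infinitely often in the sequence `ρ`. -/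
def limitSet (ρ : ℕ → V) : Set V := {v | ∀ N : ℕ, ∃ n, N ≤ n ∧ ρ n = v}

/-- The indicator of a play: the union of all `F ∈ 𝓕` with positive score
together with all non-empty accumulators of members of `𝓕`. -/
noncomputable def ind (𝓕 : Set (Set V)) (w : List V) : Set V :=
  (⋃ F ∈ {F ∈ 𝓕 | 0 < score F w}, F) ∪ ⋃ F ∈ {F ∈ 𝓕 | acc F w ≠ ∅}, acc F w

/-- An arena: a finite directed graph together with the set `V0` of vertices of
Player 0 (Player 1 owns the complement), where every vertex has a successor. -/
structure Arena (V : Type u) where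
  V0 : Set V
  E : V → V → Prop
  exists_succ : ∀ v, ∃ u, E v u

/-- The positions of Player `i`. -/
def Arena.pos (G : Arena V) (i : Fin 2) : Set V :=
  if i = 0 then G.V0 else G.V0ᶜ

/-- A strategy maps a history (the play so far, excluding the current vertex)
and the current vertex to a successor vertex. -/
abbrev Strategy (V : Type u) := List V → V → V

/-- A strategy is legal if it always moves along edges. -/
def Arena.Legal (G : Arena V) (σ : Strategy V) : Prop :=
  ∀ w v, G.E v (σ w v)

/-- An infinite play in `G` starting in `v`. -/
def Arena.IsPlay (G : Arena V) (v : V) (ρ : ℕ → V) : Prop :=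
  ρ 0 = v ∧ ∀ n, G.E (ρ n) (ρ (n + 1))

/-- An infinite play is consistent with the strategy `σ` of Player `i`. -/
def Arena.ConsistentInf (G : Arena V) (i : Fin 2) (σ : Strategy V) (ρ : ℕ → V) : Prop :=
  ∀ n, ρ n ∈ G.pos i → ρ (n + 1) = σ ((List.range n).map ρ) (ρ n)

/-- Player `i` (with winning condition `𝓕i`) wins the Muller game from `v`. -/
def Arena.MullerWinFrom (G : Arena V) (i : Fin 2) (𝓕i : Set (Set V)) (v : V) : Prop :=
  ∃ σ : Strategy V, G.Legal σ ∧
    ∀ ρ : ℕ → V, G.IsPlay v ρ → G.ConsistentInf i σ ρ → limitSet ρ ∈ 𝓕i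

/-- The winning region of Player `i` in the Muller game. -/
def Arena.MullerWinRegion (G : Arena V) (i : Fin 2) (𝓕i : Set (Set V)) : Set V :=
  {v | G.MullerWinFrom i 𝓕i v}

/-- A finite play is consistent with the strategy `σ` of Player `i`. -/
def Arena.ConsistentFin (G : Arena V) (i : Fin 2) (σ : Strategy V) (w : List V) : Prop :=
  ∀ (u : List V) (v x : V), u ++ [v, x] <+: w → v ∈ G.pos i → x = σ u v

/-- A play of the finite-time Muller game with threshold `k`: a finite path
whose maxscore (over all subsets) is exactly `k`, while the maxscore of
its proper prefixes is `< k`. -/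
def FTPlay (G : Arena V) (k : ℕ) (w : List V) : Prop :=
  w.Chain' G.E ∧ maxscore (Set.univ : Set (Set V)) w = k ∧
    maxscore (Set.univ : Set (Set V)) w.dropLast < k

/-- Player `i` wins the finite-time Muller game with threshold `k` from `v`. -/
def FTWinFrom (G : Arena V) (i : Fin 2) (𝓕i : Set (Set V)) (k : ℕ) (v : V) : Prop :=
  ∃ σ : Strategy V, G.Legal σ ∧
    ∀ w : List V, FTPlay G k w → w.head? = some v → G.ConsistentFin i σ w →
      ∃ F ∈ 𝓕i, score F w = k

/-- The winning region of Player `i` in the finite-time Muller game. -/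
def FTWinRegion (G : Arena V) (i : Fin 2) (𝓕i : Set (Set V)) (k : ℕ) : Set V :=
  {v | FTWinFrom G i 𝓕i k v}

/-- A play of McNaughton's finite-time Muller game: a finite path such that some
set `F` reaches score `|F|! + 1`, while no set did so in a proper prefix. -/
def McNPlay (G : Arena V) (w : List V) : Prop :=
  w.Chain' G.E ∧ (∃ F : Set V, score F w = F.ncard.factorial + 1) ∧
    ∀ u : List V, u <+: w → u ≠ w →
      ∀ F : Set V, score F u ≠ F.ncard.factorial + 1

/-- Player `i` wins McNaughton's finite-time Muller game from `v`. -/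
def McNWinFrom (G : Arena V) (i : Fin 2) (𝓕i : Set (Set V)) (v : V) : Prop :=
  ∃ σ : Strategy V, G.Legal σ ∧
    ∀ w : List V, McNPlay G w → w.head? = some v → G.ConsistentFin i σ w →
      ∃ F ∈ 𝓕i, score F w = F.ncard.factorial + 1

/-- The winning region of Player `i` in McNaughton's finite-time Muller game. -/
def McNWinRegion (G : Arena V) (i : Fin 2) (𝓕i : Set (Set V)) : Set V :=
  {v | McNWinFrom G i 𝓕i v}

open Classical in
/-- The list `ρ₀ ⋯ ρₙ` of the first `n+1` vertices of the unique play that starts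
in `v` and is consistent with the strategy `σ` of Player `i` and the strategy `τ`
of the other player. -/
noncomputable def playList (G : Arena V) (i : Fin 2) (σ τ : Strategy V) (v : V) :
    ℕ → List V
  | 0 => [v]
  | n + 1 =>
      let w := playList G i σ τ v n
      let u := w.getLastD v
      w ++ [if u ∈ G.pos i then σ w.dropLast u else τ w.dropLast u]

/-- `playOf G i σ τ v` : the unique play starting in `v` that is consistent with
the strategy `σ` of Player `i` and the strategy `τ` of the other player. -/
noncomputable def playOf (G : Arena V) (i : Fin 2) (σ τ : Strategy V) (v : V)
    (n : ℕ) : V :=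
  (playList G i σ τ v n).getLastD v

/-!
Three consecutive `F`-blocks `x₁ x₂ x₃` ending `w ++ x` each contain `v`, which occurs at most
once in `x`, so `x₂` starts inside `w`. If `x₂` also ends inside `w`, then `x₁ (x₂ r)` with
`x₃ = r x` shows `score F w ≥ 2`. Otherwise `w = t x₁ p` with `p` a non-empty prefix of `x₂`:
reading `p` keeps the score of `t x₁`, which is at least `1`, so `p` lies in the accumulator
of `w`, which the burden condition forbids.
-/

section Score

variable {F : Set V}

lemma occ_append (a b : List V) : occ (a ++ b) = occ a ∪ occ b := by
  ext u; simp [occ]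

lemma length_le_length_of_flatten_suffix {xs : List (List V)} {w : List V}
    (hxs : ∀ x ∈ xs, x ≠ []) (hsuf : xs.flatten <:+ w) : xs.length ≤ w.length := by
  refine le_trans ?_ hsuf.length_le
  clear hsuf
  induction xs with
  | nil => simp
  | cons a l ih =>
    have ha : 0 < a.length := List.length_pos_iff.mpr (hxs a (by simp))
    simp only [List.flatten_cons, List.length_append, List.length_cons]
    have := ih (fun x hx => hxs x (by simp [hx]))
    omega

lemma bddAbove_score_set (F : Set V) (w : List V) :
    BddAbove {k | ∃ xs : List (List V), xs.length = k ∧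
      (∀ x ∈ xs, x ≠ [] ∧ occ x = F) ∧ xs.flatten <:+ w} :=
  ⟨w.length, by
    rintro _ ⟨xs, rfl, hxs, hsuf⟩
    exact length_le_length_of_flatten_suffix (fun x hx => (hxs x hx).1) hsuf⟩

lemma length_le_score {xs : List (List V)} {w : List V}
    (hxs : ∀ x ∈ xs, x ≠ [] ∧ occ x = F) (hsuf : xs.flatten <:+ w) :
    xs.length ≤ score F w :=
  le_csSup (bddAbove_score_set F w) ⟨xs, rfl, hxs, hsuf⟩

lemma exists_flatten_suffix_length_eq_score (F : Set V) (w : List V) :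
    ∃ xs : List (List V), xs.length = score F w ∧
      (∀ x ∈ xs, x ≠ [] ∧ occ x = F) ∧ xs.flatten <:+ w := by
  refine Nat.sSup_mem ?_ (bddAbove_score_set F w)
  exact ⟨0, [], rfl, by simp, by simp⟩

lemma exists_flatten_suffix_of_le_score {w : List V} {k : ℕ} (hk : k ≤ score F w) :
    ∃ xs : List (List V), xs.length = k ∧
      (∀ x ∈ xs, x ≠ [] ∧ occ x = F) ∧ xs.flatten <:+ w := by
  obtain ⟨ys, hlen, hys, hsuf⟩ := exists_flatten_suffix_length_eq_score F w
  refine ⟨ys.drop (score F w - k), by simp [hlen]; omega,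
    fun x hx => hys x (List.mem_of_mem_drop hx), List.IsSuffix.trans ?_ hsuf⟩
  conv_rhs => rw [← List.take_append_drop (score F w - k) ys, List.flatten_append]
  exact List.suffix_append _ _

/-- Letters of `F` extend the last block, so they never lower the score. -/
lemma score_le_score_append {r : List V} (hr : occ r ⊆ F) (u : List V) :
    score F u ≤ score F (u ++ r) := by
  obtain ⟨ys, hlen, hys, s, hs⟩ := exists_flatten_suffix_length_eq_score F u
  rcases List.eq_nil_or_concat ys with rfl | ⟨ys, b, rfl⟩
  · simp [← hlen]
  have hb := hys b (by simp)
  rw [← hlen]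
  refine (length_le_score (xs := ys ++ [b ++ r]) ?_ ⟨s, ?_⟩).trans_eq' (by simp)
  · intro x hx
    rcases List.mem_append.mp hx with hx | hx
    · exact hys x (by simp [hx])
    · obtain rfl := List.mem_singleton.mp hx
      exact ⟨by simp [hb.1], by rw [occ_append, hb.2, Set.union_eq_left.mpr hr]⟩
  · simp [← hs]

lemma accGood_append {u p : List V} (hp : occ p ⊆ F) (h : score F (u ++ p) ≤ score F u) :
    AccGood F (u ++ p) p := by
  refine ⟨List.suffix_append u p, hp, ?_⟩
  rintro y ⟨p', rfl⟩
  have htake : (u ++ (p' ++ y)).take ((u ++ (p' ++ y)).length - y.length) = u ++ p' := by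
    rw [← List.append_assoc, List.length_append, Nat.add_sub_cancel, List.take_left]
  rw [occ_append] at hp
  have h₁ := score_le_score_append (Set.union_subset_iff.mp hp).1 u
  have h₂ := score_le_score_append (Set.union_subset_iff.mp hp).2 (u ++ p')
  rw [List.append_assoc] at h₂
  rw [htake]
  omega

lemma acc_nonempty_of_accGood {w p : List V} (hp : p ≠ []) (h : AccGood F w p) :
    (acc F w).Nonempty := by
  have hdrop : w.drop (w.length - p.length) = p := (List.suffix_iff_eq_drop.mp h.1).symm
  have hle : sInf {i | AccGood F w (w.drop i)} ≤ w.length - p.length :=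
    Nat.sInf_le (show AccGood F w (w.drop (w.length - p.length)) by rw [hdrop]; exact h)
  have hpos : 0 < p.length := List.length_pos_iff.mpr hp
  have hlen := h.1.length_le
  exact List.exists_mem_of_ne_nil _ (List.ne_nil_of_length_pos (by rw [List.length_drop]; omega))

lemma score_lt_score_append_of_acc_eq_empty {u p : List V} (hp : p ≠ []) (hpF : occ p ⊆ F)
    (hacc : acc F (u ++ p) = ∅) : score F u < score F (u ++ p) := by
  by_contra! h
  exact (acc_nonempty_of_accGood hp (accGood_append hpF h)).ne_empty hacc

end Score

lemma not_sublist_pair_map_range {ρ : ℕ → V} {v : V}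
    (hρ : ∀ m n : ℕ, ρ m = v → ρ n = v → m = n) (n : ℕ) :
    ¬ [v, v].Sublist ((List.range n).map ρ) := by
  intro h
  obtain ⟨l, hl, hmap⟩ := List.sublist_map_iff.mp h
  obtain ⟨i, j, rfl⟩ : ∃ i j, l = [i, j] :=
    List.length_eq_two.mp (by simpa using (congrArg List.length hmap).symm)
  simp only [List.map_cons, List.map_nil, List.cons.injEq, and_true] at hmap
  have hij : i ≠ j := List.pairwise_pair.mp (hl.nodup List.nodup_range)
  exact hij (hρ i j hmap.1.symm hmap.2.symm)

theorem score_append_le_two {F : Set V} {w x : List V}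
    (hw : score F w = 0 ∨ (score F w = 1 ∧ acc F w = ∅)) {v : V} (hv : v ∈ F)
    (hx : ¬ [v, v].Sublist x) : score F (w ++ x) ≤ 2 := by
  by_contra! h3
  obtain ⟨xs, hlen, hxs, t, ht⟩ := exists_flatten_suffix_of_le_score (k := 3) h3
  obtain ⟨x₁, x₂, x₃, rfl⟩ := List.length_eq_three.mp hlen
  simp only [List.mem_cons, List.not_mem_nil, or_false, forall_eq_or_imp, forall_eq] at hxs
  obtain ⟨⟨hx₁ne, hx₁⟩, ⟨hx₂ne, hx₂⟩, ⟨-, hx₃⟩⟩ := hxs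
  simp only [List.flatten_cons, List.flatten_nil, List.append_nil] at ht
  have hw1 : score F w ≤ 1 := by omega
  have hscore₁ : 1 ≤ score F (t ++ x₁) :=
    length_le_score (xs := [x₁]) (by simpa [hx₁] using hx₁ne) (by simp)
  have hscore₂ : 2 ≤ score F (t ++ x₁ ++ x₂) :=
    length_le_score (xs := [x₁, x₂]) (by simp [hx₁ne, hx₁, hx₂ne, hx₂]) (by simp)
  have hx₂₃ : ∀ c, x ≠ c ++ (x₂ ++ x₃) := by
    rintro c rfl
    have hvx₂ : [v].Sublist x₂ :=
      List.singleton_sublist.mpr (hx₂.symm ▸ hv : v ∈ occ x₂)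
    have hvx₃ : [v].Sublist x₃ :=
      List.singleton_sublist.mpr (hx₃.symm ▸ hv : v ∈ occ x₃)
    exact hx ((hvx₂.append hvx₃).trans (List.sublist_append_right c _))
  rw [← List.append_assoc, ← List.append_assoc, List.append_eq_append_iff] at ht
  rcases ht with ⟨r, rfl, rfl⟩ | ⟨c, hc, rfl⟩
  · -- `x₂` ends inside `w`
    have hr : occ r ⊆ F := by rw [← hx₃, occ_append]; exact Set.subset_union_left
    have := score_le_score_append hr (t ++ x₁ ++ x₂)
    omega
  rw [List.append_eq_append_iff] at hc
  rcases hc with ⟨p, rfl, rfl⟩ | ⟨c', -, rfl⟩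
  · rcases eq_or_ne p [] with rfl | hp
    · exact hx₂₃ [] (by simp)
    · -- `x₂` straddles the end of `w`
      have hpF : occ p ⊆ F := by rw [← hx₂, occ_append]; exact Set.subset_union_left
      have hmono := score_le_score_append hpF (t ++ x₁)
      rcases hw with h0 | ⟨-, hacc⟩
      · omega
      · have := score_lt_score_append_of_acc_eq_empty hp hpF hacc
        omega
  · exact hx₂₃ c' (by simp)

theorem stmt_7_general {V : Type u} (F : Set V) (w : List V)
    (hw : Burden {F} w) (v : V) (hv : v ∈ F) (ρ : ℕ → V)
    (hρ : ∀ m n : ℕ, ρ m = v → ρ n = v → m = n) :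
    ∀ n : ℕ, score F (w ++ (List.range n).map ρ) ≤ 2 :=
  fun n => score_append_le_two (hw.2.2 F rfl) hv (not_sublist_pair_map_range hρ n)

/-- Let `w` be an `{F}`-burden, let `v ∈ F`, and let `ρ` be an
infinite sequence in which `v` appears at most once. Then
`maxscore_{{F}}(wρ) ≤ 2`, i.e., `score F (w x) ≤ 2` for every finite prefix `x`
of `ρ`. -/
theorem stmt_7 {V : Type u} [Fintype V] (F : Set V) (w : List V)
    (hw : Burden {F} w) (v : V) (hv : v ∈ F) (ρ : ℕ → V)
    (hρ : ∀ m n : ℕ, ρ m = v → ρ n = v → m = n) :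
    ∀ n : ℕ, score F (w ++ (List.range n).map ρ) ≤ 2 :=
  stmt_7_general F w hw v hv ρ hρ
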